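/- Let A₁ = P₁ − R₁ + S₁ be a convergent double weak splitting of type II of a symmetric nonsingular matrix A₁ ∈ ℝ^{n×n}, with iteration matrix W̃₁ = [[(R₁P₁⁻¹)ᵀ, −(S₁P₁⁻¹)ᵀ],[I, 0]], and let A₂ = P₂ − R₂ + S₂ be a convergent double weak splitting of type I of a symmetric nonsingular matrix A₂ ∈ ℝ^{n×n}, with iteration matrix Ŵ₂ = [[P₂⁻¹R₂, −P₂⁻¹S₂],[I, 0]]. If P₂⁻¹R₂ ≤ (R₁P₁⁻¹)ᵀ and P₂⁻¹A₂ ≤ (P₁⁻¹)ᵀA₁, then ρ(W̃₁) ≤ ρ(Ŵ₂) < 1. -/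

import Mathlib

open Matrix Filter Topology

/-- The spectral radius of a real square matrix: the maximum (supremum) of the
moduli of its complex eigenvalues. -/
noncomputable def specRad {n : Type*} [Fintype n] [DecidableEq n]
    (B : Matrix n n ℝ) : ℝ :=
  sSup ((fun z : ℂ => ‖z‖) '' spectrum ℂ (B.map Complex.ofReal))

/-- Entrywise order on real matrices: `entryLE A B` means every entry of `A` is
at most the corresponding entry of `B`. -/
def entryLE {m n : Type*} (A B : Matrix m n ℝ) : Prop :=
  ∀ i j, A i j ≤ B i j

/-- `X` is the Moore–Penrose inverse of `A`. -/
def IsMoorePenrose {m n : Type*} [Fintype m] [Fintype n]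
    (A : Matrix m n ℝ) (X : Matrix n m ℝ) : Prop :=
  A * X * A = A ∧ X * A * X = X ∧ (A * X)ᵀ = A * X ∧ (X * A)ᵀ = X * A

/-- Iteration matrix of a double weak splitting of type II:
`W̃ = [[(RP⁻¹)ᵀ, −(SP⁻¹)ᵀ],[I, 0]]`. -/
noncomputable def itMatII {n : Type*} [Fintype n] [DecidableEq n]
    (P R S : Matrix n n ℝ) : Matrix (n ⊕ n) (n ⊕ n) ℝ :=
  Matrix.fromBlocks ((R * P⁻¹)ᵀ) (-((S * P⁻¹)ᵀ)) 1 0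

/-- Iteration matrix of a double weak splitting of type I:
`Ŵ = [[P⁻¹R, −P⁻¹S],[I, 0]]`. -/
noncomputable def itMatI {n : Type*} [Fintype n] [DecidableEq n]
    (P R S : Matrix n n ℝ) : Matrix (n ⊕ n) (n ⊕ n) ℝ :=
  Matrix.fromBlocks (P⁻¹ * R) (-(P⁻¹ * S)) 1 0

/-!
Write `W̃₁ = [[F₁, G₁], [I, 0]]` and `Ŵ₂ = [[F₂, G₂], [I, 0]]` with the nonnegative blocks
`F₁ = (R₁P₁⁻¹)ᵀ`, `G₁ = -(S₁P₁⁻¹)ᵀ`, `F₂ = P₂⁻¹R₂`, `G₂ = -P₂⁻¹S₂`. The comparison hypotheses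
say that `F₂ ≤ F₁` and `F₁ + G₁ ≤ F₂ + G₂`, since `P₂⁻¹A₂ = I - F₂ - G₂` and, by symmetry of
`A₁`, `(P₁⁻¹)ᵀA₁ = (A₁P₁⁻¹)ᵀ = I - F₁ - G₁`. If `(u, w)` is an eigenvector of `W̃₁` for an
eigenvalue `λ` with `|λ| = ρ := ρ(W̃₁) ≤ 1`, then `u = λw`, and `x := |w|` satisfies
`ρ²x ≤ (ρF₁ + G₁)x ≤ (ρF₂ + G₂)x`. Hence `z := (ρx, x) ≥ 0` satisfies `ρz ≤ Ŵ₂z`, and the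
Collatz–Wielandt bound, proved from Gelfand's formula, gives `ρ ≤ ρ(Ŵ₂)`.
-/

section Nonneg

variable {l m n : Type*}

theorem entryLE_zero_transpose {A : Matrix m n ℝ} (hA : entryLE 0 A) : entryLE 0 Aᵀ :=
  fun i j => hA j i

theorem entryLE_of_sub_le_sub {C X Y : Matrix m n ℝ} (h : entryLE (C - X) (C - Y)) :
    entryLE Y X :=
  fun i j => by simpa only [Matrix.sub_apply, sub_le_sub_iff_left] using h i j

theorem entryLE_zero_one [DecidableEq m] : entryLE 0 (1 : Matrix m m ℝ) := fun i j => by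
  rw [one_apply]
  split_ifs <;> simp

theorem entryLE_zero_mul [Fintype m] {A : Matrix l m ℝ} {B : Matrix m n ℝ} (hA : entryLE 0 A)
    (hB : entryLE 0 B) : entryLE 0 (A * B) :=
  fun i j => Finset.sum_nonneg fun k _ => mul_nonneg (hA i k) (hB k j)

theorem entryLE_zero_pow [Fintype m] [DecidableEq m] {B : Matrix m m ℝ} (hB : entryLE 0 B)
    (k : ℕ) : entryLE 0 (B ^ k) := by
  induction k with
  | zero => exact entryLE_zero_one
  | succ k ih => exact pow_succ B k ▸ entryLE_zero_mul ih hB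

theorem entryLE_zero_fromBlocks {o : Type*} {A : Matrix n l ℝ} {B : Matrix n m ℝ}
    {C : Matrix o l ℝ} {D : Matrix o m ℝ} (hA : entryLE 0 A) (hB : entryLE 0 B)
    (hC : entryLE 0 C) (hD : entryLE 0 D) : entryLE 0 (fromBlocks A B C D) := by
  rintro (i | i) (j | j)
  · exact hA i j
  · exact hB i j
  · exact hC i j
  · exact hD i j

theorem mulVec_mono_of_entryLE_zero [Fintype m] {B : Matrix l m ℝ} (hB : entryLE 0 B)
    {a b : m → ℝ} (hab : a ≤ b) : B *ᵥ a ≤ B *ᵥ b :=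
  fun i => Finset.sum_le_sum fun j _ => mul_le_mul_of_nonneg_left (hab j) (hB i j)

theorem mulVec_le_mulVec_of_entryLE [Fintype m] {B C : Matrix l m ℝ} (hBC : entryLE B C)
    {x : m → ℝ} (hx : 0 ≤ x) : B *ᵥ x ≤ C *ᵥ x :=
  fun i => Finset.sum_le_sum fun j _ => mul_le_mul_of_nonneg_right (hBC i j) (hx j)

theorem norm_map_ofReal_mulVec_le [Fintype m] {B : Matrix l m ℝ} (hB : entryLE 0 B)
    (u : m → ℂ) (i : l) : ‖(B.map Complex.ofReal *ᵥ u) i‖ ≤ (B *ᵥ fun j => ‖u j‖) i := by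
  refine (norm_sum_le _ _).trans_eq (Finset.sum_congr rfl fun j _ => ?_)
  dsimp only
  rw [map_apply, norm_mul, Complex.norm_real, Real.norm_of_nonneg (hB i j)]

theorem pow_smul_le_pow_mulVec [Fintype m] [DecidableEq m] {B : Matrix m m ℝ}
    (hB : entryLE 0 B) {x : m → ℝ} {r : ℝ} (hr : 0 ≤ r) (h : r • x ≤ B *ᵥ x) (k : ℕ) :
    r ^ k • x ≤ (B ^ k) *ᵥ x := by
  induction k with
  | zero => simp
  | succ k ih =>
    calc r ^ (k + 1) • x = r • r ^ k • x := by rw [pow_succ', mul_smul]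
      _ ≤ r • ((B ^ k) *ᵥ x) := smul_le_smul_of_nonneg_left ih hr
      _ = (B ^ k) *ᵥ (r • x) := (mulVec_smul _ _ _).symm
      _ ≤ (B ^ k) *ᵥ (B *ᵥ x) := mulVec_mono_of_entryLE_zero (entryLE_zero_pow hB k) h
      _ = (B ^ (k + 1)) *ᵥ x := by rw [mulVec_mulVec, pow_succ]

end Nonneg

section SpectralRadius

attribute [local instance] Matrix.linftyOpNormedRing Matrix.linftyOpNormedAlgebra

variable {m : Type*} [Fintype m] [DecidableEq m]

theorem specRad_of_isEmpty [IsEmpty m] (B : Matrix m m ℝ) : specRad B = 0 := by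
  simp [specRad]

theorem norm_le_specRad (B : Matrix m m ℝ) {z : ℂ}
    (hz : z ∈ spectrum ℂ (B.map Complex.ofReal)) : ‖z‖ ≤ specRad B :=
  le_csSup ((finite_spectrum _).image _).bddAbove (Set.mem_image_of_mem _ hz)

theorem specRad_nonneg (B : Matrix m m ℝ) : 0 ≤ specRad B :=
  Real.sSup_nonneg (by rintro _ ⟨z, -, rfl⟩; exact norm_nonneg z)

theorem exists_mulVec_eq_smul_norm_eq_specRad [Nonempty m] (B : Matrix m m ℝ) :
    ∃ (z : ℂ) (v : m → ℂ), v ≠ 0 ∧ B.map Complex.ofReal *ᵥ v = z • v ∧ ‖z‖ = specRad B := by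
  have hmem : specRad B ∈ (fun z : ℂ => ‖z‖) '' spectrum ℂ (B.map Complex.ofReal) :=
    ((spectrum.nonempty _).image _).csSup_mem ((finite_spectrum _).image _)
  obtain ⟨z, hz, hnorm⟩ := hmem
  rw [spectrum.mem_iff, isUnit_iff_isUnit_det, isUnit_iff_ne_zero, not_not] at hz
  obtain ⟨v, hv, hker⟩ := exists_mulVec_eq_zero_iff.2 hz
  refine ⟨z, v, hv, ?_, hnorm⟩
  rw [sub_mulVec, Algebra.algebraMap_eq_smul_one, smul_mulVec, one_mulVec, sub_eq_zero] at hker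
  exact hker.symm

theorem eventually_norm_pow_le_pow {A : Type*} [NormedRing A] [NormedAlgebra ℂ A]
    [CompleteSpace A] {a : A} {r : ℝ} (hr : spectralRadius ℂ a < ENNReal.ofReal r) :
    ∀ᶠ k in atTop, ‖a ^ k‖ ≤ r ^ k := by
  filter_upwards [(spectrum.pow_norm_pow_one_div_tendsto_nhds_spectralRadius a).eventually_lt_const
    hr, eventually_ge_atTop 1] with k hk hk1
  calc ‖a ^ k‖ = (‖a ^ k‖ ^ (1 / k : ℝ)) ^ k := by
        rw [one_div, Real.rpow_inv_natCast_pow (norm_nonneg _) (by omega)]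
    _ ≤ r ^ k := pow_le_pow_left₀ (by positivity) (ENNReal.ofReal_lt_ofReal_iff'.1 hk).1.le k

theorem linfty_opNorm_map_ofReal (B : Matrix m m ℝ) : ‖B.map Complex.ofReal‖ = ‖B‖ := by
  simp only [linfty_opNorm_def, map_apply, Complex.nnnorm_real]

theorem eventually_norm_pow_le_of_specRad_lt {B : Matrix m m ℝ} {r : ℝ} (hr : specRad B < r) :
    ∀ᶠ k in atTop, ‖B ^ k‖ ≤ r ^ k := by
  have hspec : spectralRadius ℂ (B.map Complex.ofReal) < ENNReal.ofReal r :=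
    (iSup₂_le fun z hz => by
        rw [← ENNReal.ofReal_coe_nnreal, coe_nnnorm]
        exact ENNReal.ofReal_le_ofReal (norm_le_specRad B hz)).trans_lt
      ((ENNReal.ofReal_lt_ofReal_iff ((specRad_nonneg B).trans_lt hr)).2 hr)
  filter_upwards [eventually_norm_pow_le_pow hspec] with k hk
  have hpow : (B ^ k).map Complex.ofReal = B.map Complex.ofReal ^ k :=
    Matrix.map_pow B Complex.ofRealHom k
  rwa [← hpow, linfty_opNorm_map_ofReal] at hk

theorem le_specRad_of_smul_le_mulVec {B : Matrix m m ℝ} (hB : entryLE 0 B) {x : m → ℝ}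
    (hx : 0 ≤ x) (hx0 : x ≠ 0) {r : ℝ} (h : r • x ≤ B *ᵥ x) : r ≤ specRad B := by
  by_contra! hlt
  obtain ⟨i, hi⟩ : ∃ i, 0 < x i := by
    by_contra! hle
    exact hx0 (funext fun i => le_antisymm (hle i) (hx i))
  obtain ⟨r', hBr', hr'r⟩ := exists_between hlt
  have hr' : 0 < r' := (specRad_nonneg B).trans_lt hBr'
  obtain ⟨k, hk, hgrowth⟩ := ((eventually_norm_pow_le_of_specRad_lt hBr').and
    ((tendsto_pow_atTop_atTop_of_one_lt ((one_lt_div hr').2 hr'r)).eventually_gt_atTop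
      (‖x‖ / x i))).exists
  have hbound : r ^ k * x i ≤ r' ^ k * ‖x‖ :=
    calc r ^ k * x i ≤ ((B ^ k) *ᵥ x) i := pow_smul_le_pow_mulVec hB (by linarith) h k i
      _ ≤ ‖(B ^ k) *ᵥ x‖ := (le_abs_self _).trans (norm_le_pi_norm ((B ^ k) *ᵥ x) i)
      _ ≤ ‖B ^ k‖ * ‖x‖ := linfty_opNorm_mulVec _ _
      _ ≤ r' ^ k * ‖x‖ := by gcongr
  rw [div_pow, div_lt_div_iff₀ hi (pow_pos hr' k)] at hgrowth
  linarith

end SpectralRadius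

section BlockIteration

variable {m : Type*} [Fintype m] [DecidableEq m]

theorem exists_sq_smul_le_of_fromBlocks_mulVec_eq_smul {F G : Matrix m m ℝ} (hF : entryLE 0 F)
    (hG : entryLE 0 G) {z : ℂ} {v : m ⊕ m → ℂ} (hv : v ≠ 0)
    (hev : (fromBlocks F G 1 0).map Complex.ofReal *ᵥ v = z • v) :
    ∃ x : m → ℝ, 0 ≤ x ∧ x ≠ 0 ∧ ‖z‖ ^ 2 • x ≤ (‖z‖ • F + G) *ᵥ x := by
  set u := v ∘ Sum.inl
  set w := v ∘ Sum.inr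
  rw [fromBlocks_map, fromBlocks_mulVec, Matrix.map_zero _ Complex.ofReal_zero,
    Matrix.map_one _ Complex.ofReal_zero Complex.ofReal_one, one_mulVec, zero_mulVec,
    add_zero] at hev
  have htop : F.map Complex.ofReal *ᵥ u + G.map Complex.ofReal *ᵥ w = z • u :=
    funext fun i => congrFun hev (Sum.inl i)
  have hbot : u = z • w := funext fun i => congrFun hev (Sum.inr i)
  refine ⟨fun i => ‖w i‖, fun i => norm_nonneg _, fun hx => hv ?_, fun i => ?_⟩
  · have hw : w = 0 := funext fun i => norm_eq_zero.1 (congrFun hx i)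
    ext (i | i)
    · exact congrFun (hbot.trans (by rw [hw, smul_zero])) i
    · exact congrFun hw i
  · have hu : (fun j => ‖u j‖) = ‖z‖ • fun j => ‖w j‖ := by
      ext j; simp [hbot]
    calc ‖z‖ ^ 2 * ‖w i‖ = ‖(z • u) i‖ := by simp [hbot]; ring
      _ ≤ (F *ᵥ fun j => ‖u j‖) i + (G *ᵥ fun j => ‖w j‖) i := by
          rw [← htop, Pi.add_apply]
          exact (norm_add_le _ _).trans
            (add_le_add (norm_map_ofReal_mulVec_le hF u i) (norm_map_ofReal_mulVec_le hG w i))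
      _ = ((‖z‖ • F + G) *ᵥ fun j => ‖w j‖) i := by
          rw [hu, mulVec_smul, add_mulVec, smul_mulVec, Pi.add_apply]

theorem smul_le_fromBlocks_mulVec {F G : Matrix m m ℝ} {x : m → ℝ} {r : ℝ}
    (h : r ^ 2 • x ≤ (r • F + G) *ᵥ x) :
    r • Sum.elim (r • x) x ≤ fromBlocks F G 1 0 *ᵥ Sum.elim (r • x) x := by
  rw [fromBlocks_mulVec, Sum.elim_comp_inl, Sum.elim_comp_inr, one_mulVec, zero_mulVec, add_zero]
  rintro (i | i)
  · calc r • (r • x) i = (r ^ 2 • x) i := by simp only [Pi.smul_apply, smul_smul, sq]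
      _ ≤ ((r • F + G) *ᵥ x) i := h i
      _ = (F *ᵥ (r • x) + G *ᵥ x) i := by rw [add_mulVec, smul_mulVec, mulVec_smul]
  · exact le_rfl

theorem specRad_fromBlocks_le {F₁ G₁ F₂ G₂ : Matrix m m ℝ} (hF₁ : entryLE 0 F₁)
    (hG₁ : entryLE 0 G₁) (hF₂ : entryLE 0 F₂) (hG₂ : entryLE 0 G₂) (hF : entryLE F₂ F₁)
    (hFG : entryLE (F₁ + G₁) (F₂ + G₂)) (hρ : specRad (fromBlocks F₁ G₁ 1 0) ≤ 1) :
    specRad (fromBlocks F₁ G₁ 1 0) ≤ specRad (fromBlocks F₂ G₂ 1 0) := by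
  rcases isEmpty_or_nonempty m with hm | hm
  · simp only [specRad_of_isEmpty, le_refl]
  obtain ⟨z, v, hv, hev, hz⟩ := exists_mulVec_eq_smul_norm_eq_specRad (fromBlocks F₁ G₁ 1 0)
  obtain ⟨x, hx, hx0, hsq⟩ := exists_sq_smul_le_of_fromBlocks_mulVec_eq_smul hF₁ hG₁ hv hev
  rw [hz] at hsq
  set ρ := specRad (fromBlocks F₁ G₁ 1 0)
  have hρ0 : 0 ≤ ρ := specRad_nonneg _
  -- `ρF₁ + G₁ = (F₁ + G₁) - (1 - ρ)F₁`, where `1 - ρ ≥ 0` and `F₂ ≤ F₁`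
  have hmat : entryLE (ρ • F₁ + G₁) (ρ • F₂ + G₂) := fun i j => by
    have := hFG i j
    simp only [Matrix.add_apply, Matrix.smul_apply, smul_eq_mul] at this ⊢
    nlinarith [hF i j]
  refine le_specRad_of_smul_le_mulVec
    (entryLE_zero_fromBlocks hF₂ hG₂ entryLE_zero_one fun _ _ => le_rfl) ?_ ?_
    (smul_le_fromBlocks_mulVec (hsq.trans (mulVec_le_mulVec_of_entryLE hmat hx)))
  · rintro (i | i)
    · exact mul_nonneg hρ0 (hx i)
    · exact hx i
  · intro h0
    exact hx0 (funext fun i => congrFun h0 (Sum.inr i))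

end BlockIteration

theorem inv_mul_split_eq {n : Type*} [Fintype n] [DecidableEq n] {P R S : Matrix n n ℝ}
    (hP : IsUnit P.det) : P⁻¹ * (P - R + S) = 1 - (P⁻¹ * R + -(P⁻¹ * S)) := by
  rw [mul_add, mul_sub, nonsing_inv_mul _ hP]
  abel

theorem transpose_inv_mul_split_eq {n : Type*} [Fintype n] [DecidableEq n]
    {A P R S : Matrix n n ℝ} (hA : Aᵀ = A) (hsplit : A = P - R + S) (hP : IsUnit P.det) :
    (P⁻¹)ᵀ * A = 1 - ((R * P⁻¹)ᵀ + -((S * P⁻¹)ᵀ)) := by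
  rw [← hA, ← transpose_mul, hsplit, add_mul, sub_mul, mul_nonsing_inv _ hP]
  simp only [transpose_add, transpose_sub, transpose_one]
  abel

theorem stmt14_general {n : ℕ} (A₁ P₁ R₁ S₁ A₂ P₂ R₂ S₂ : Matrix (Fin n) (Fin n) ℝ)
    (hAsym₁ : A₁ᵀ = A₁)
    -- `A₁ = P₁ − R₁ + S₁` is a double weak splitting of type II
    (hsplit₁ : A₁ = P₁ - R₁ + S₁) (hPinv₁ : IsUnit P₁.det)
    (hRP₁ : entryLE 0 (R₁ * P₁⁻¹)) (hSP₁ : entryLE 0 (-(S₁ * P₁⁻¹)))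
    -- `A₂ = P₂ − R₂ + S₂` is a double weak splitting of type I
    (hsplit₂ : A₂ = P₂ - R₂ + S₂) (hPinv₂ : IsUnit P₂.det)
    (hRP₂ : entryLE 0 (P₂⁻¹ * R₂)) (hSP₂ : entryLE 0 (-(P₂⁻¹ * S₂)))
    -- both splittings are convergent
    (hconv₁ : specRad (itMatII P₁ R₁ S₁) < 1)
    (hconv₂ : specRad (itMatI P₂ R₂ S₂) < 1)
    -- `P₂⁻¹R₂ ≤ (R₁P₁⁻¹)ᵀ` and `P₂⁻¹A₂ ≤ (P₁⁻¹)ᵀA₁`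
    (hR : entryLE (P₂⁻¹ * R₂) ((R₁ * P₁⁻¹)ᵀ))
    (hAP : entryLE (P₂⁻¹ * A₂) ((P₁⁻¹)ᵀ * A₁)) :
    specRad (itMatII P₁ R₁ S₁) ≤ specRad (itMatI P₂ R₂ S₂) ∧
      specRad (itMatI P₂ R₂ S₂) < 1 := by
  have hG₁ : entryLE 0 (-((S₁ * P₁⁻¹)ᵀ)) := transpose_neg (S₁ * P₁⁻¹) ▸ entryLE_zero_transpose hSP₁
  have hsum : entryLE ((R₁ * P₁⁻¹)ᵀ + -((S₁ * P₁⁻¹)ᵀ)) (P₂⁻¹ * R₂ + -(P₂⁻¹ * S₂)) := by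
    refine entryLE_of_sub_le_sub (C := 1) ?_
    rwa [← transpose_inv_mul_split_eq hAsym₁ hsplit₁ hPinv₁, ← inv_mul_split_eq hPinv₂, ← hsplit₂]
  exact ⟨specRad_fromBlocks_le (entryLE_zero_transpose hRP₁) hG₁ hRP₂ hSP₂ hR hsum hconv₁.le,
    hconv₂⟩

theorem stmt14 {n : ℕ} (A₁ P₁ R₁ S₁ A₂ P₂ R₂ S₂ : Matrix (Fin n) (Fin n) ℝ)
    (hAsym₁ : A₁ᵀ = A₁) (hAinv₁ : IsUnit A₁.det)
    (hAsym₂ : A₂ᵀ = A₂) (hAinv₂ : IsUnit A₂.det)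
    -- `A₁ = P₁ − R₁ + S₁` is a double weak splitting of type II
    (hsplit₁ : A₁ = P₁ - R₁ + S₁) (hPinv₁ : IsUnit P₁.det)
    (hRP₁ : entryLE 0 (R₁ * P₁⁻¹)) (hSP₁ : entryLE 0 (-(S₁ * P₁⁻¹)))
    -- `A₂ = P₂ − R₂ + S₂` is a double weak splitting of type I
    (hsplit₂ : A₂ = P₂ - R₂ + S₂) (hPinv₂ : IsUnit P₂.det)
    (hRP₂ : entryLE 0 (P₂⁻¹ * R₂)) (hSP₂ : entryLE 0 (-(P₂⁻¹ * S₂)))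
    -- both splittings are convergent
    (hconv₁ : specRad (itMatII P₁ R₁ S₁) < 1)
    (hconv₂ : specRad (itMatI P₂ R₂ S₂) < 1)
    -- `P₂⁻¹R₂ ≤ (R₁P₁⁻¹)ᵀ` and `P₂⁻¹A₂ ≤ (P₁⁻¹)ᵀA₁`
    (hR : entryLE (P₂⁻¹ * R₂) ((R₁ * P₁⁻¹)ᵀ))
    (hAP : entryLE (P₂⁻¹ * A₂) ((P₁⁻¹)ᵀ * A₁)) :
    specRad (itMatII P₁ R₁ S₁) ≤ specRad (itMatI P₂ R₂ S₂) ∧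
      specRad (itMatI P₂ R₂ S₂) < 1 :=
  stmt14_general A₁ P₁ R₁ S₁ A₂ P₂ R₂ S₂ hAsym₁ hsplit₁ hPinv₁ hRP₁ hSP₁ hsplit₂ hPinv₂ hRP₂ hSP₂
    hconv₁ hconv₂ hR hAP
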